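/- Let R = 𝔽₂[ℤ³] be the group algebra over 𝔽₂ of ℤ³, with augmentation homomorphism ε : R → 𝔽₂ sending each T_i to 1, and let K be the field of fractions of R. Let C be a finite free R-module and ∂ : C → C an R-linear map with ∂ ∘ ∂ = 0. Then dim_{𝔽₂} ( ker(∂̄)/range(∂̄) ) ≥ dim_K ( ker(∂_K)/range(∂_K) ), where ∂̄ is the base change of ∂ to C ⊗_{R,ε} 𝔽₂ and ∂_K is the base change of ∂ to C ⊗_R K. -/

import Mathlib

/-- The group algebra `R = 𝔽₂[ℤ³]`. -/
abbrev GroupAlgZ3 : Type := AddMonoidAlgebra (ZMod 2) (Fin 3 → ℤ)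

instance : IsDomain GroupAlgZ3 := NoZeroDivisors.to_isDomain _

/-- The augmentation homomorphism `ε : 𝔽₂[ℤ³] → 𝔽₂` sending every group
element (in particular each `T_i`) to `1`. -/
noncomputable def augEps : GroupAlgZ3 →ₐ[ZMod 2] ZMod 2 :=
  AddMonoidAlgebra.lift (ZMod 2) (ZMod 2) (Fin 3 → ℤ) 1

/-- `𝔽₂` as an `𝔽₂[ℤ³]`-algebra via the augmentation `ε`. -/
noncomputable instance : Algebra GroupAlgZ3 (ZMod 2) :=
  (augEps : GroupAlgZ3 →+* ZMod 2).toAlgebra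

/-- The homology of a differential module `(C, ∂)`: `ker ∂` modulo `range ∂`
(pulled back to a submodule of `ker ∂`). -/
noncomputable def homologyOf {S C : Type*} [CommRing S] [AddCommGroup C] [Module S C]
    (d : C →ₗ[S] C) : Type _ :=
  (LinearMap.ker d) ⧸ ((LinearMap.range d).comap (LinearMap.ker d).subtype)

noncomputable instance {S C : Type*} [CommRing S] [AddCommGroup C] [Module S C]
    (d : C →ₗ[S] C) : AddCommGroup (homologyOf d) :=
  inferInstanceAs (AddCommGroup
    ((LinearMap.ker d) ⧸ ((LinearMap.range d).comap (LinearMap.ker d).subtype)))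

noncomputable instance {S C : Type*} [CommRing S] [AddCommGroup C] [Module S C]
    (d : C →ₗ[S] C) : Module S (homologyOf d) :=
  inferInstanceAs (Module S
    ((LinearMap.ker d) ⧸ ((LinearMap.range d).comap (LinearMap.ker d).subtype)))

/-!
Over a field, the homology of a differential `e` on `V` has dimension `dim V - 2 rank e`. After
choosing a basis of `C`, both base changes of `∂` are represented by the images of one matrix `M`
over `R`. A nonzero `r × r` minor of the image of `M` over `𝔽₂` is the image of a nonzero minor of
`M`, which stays nonzero in `K` since `R → K` is injective. So `rank ∂_K ≥ rank ∂̄`.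
-/

open Module

namespace Matrix

variable {F m n : Type*} [Field F] [Fintype m] [Fintype n]

theorem exists_linearIndependent_row_submatrix (A : Matrix m n F) {r : ℕ} (hr : A.rank = r) :
    ∃ f : Fin r → m, LinearIndependent F (A.submatrix f id).row := by
  obtain ⟨κ, a, ha, hspan, hli⟩ := exists_linearIndependent' F A.row
  have : Fintype κ := Fintype.ofInjective a ha
  have hcard : Fintype.card κ = r := by
    rw [← hr, rank_eq_finrank_span_row, ← hspan, finrank_span_eq_card hli]
  let e : Fin r ≃ κ := (Fintype.equivFinOfCardEq hcard).symm
  exact ⟨a ∘ e, hli.comp e e.injective⟩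

theorem exists_submatrix_det_ne_zero (A : Matrix m n F) :
    ∃ (f : Fin A.rank → m) (g : Fin A.rank → n), (A.submatrix f g).det ≠ 0 := by
  obtain ⟨f, hf⟩ := A.exists_linearIndependent_row_submatrix rfl
  have hrank : (A.submatrix f id)ᵀ.rank = A.rank := by
    rw [rank_transpose, hf.rank_matrix, Fintype.card_fin]
  obtain ⟨g, hg⟩ := (A.submatrix f id)ᵀ.exists_linearIndependent_row_submatrix hrank
  refine ⟨f, g, fun h ↦ ?_⟩
  rw [← det_transpose, ← isUnit_iff_ne_zero.not_left, ← isUnit_iff_isUnit_det] at h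
  exact h (linearIndependent_rows_iff_isUnit.mp hg)

theorem rank_map_le_rank_map_of_injective {R K : Type*} [CommRing R] [Field K]
    {ψ : R →+* K} (hψ : Function.Injective ψ) (φ : R →+* F) (M : Matrix m n R) :
    (M.map φ).rank ≤ (M.map ψ).rank := by
  obtain ⟨f, g, hdetφ⟩ := (M.map φ).exists_submatrix_det_ne_zero
  have hdetψ : ((M.map ψ).submatrix f g).det ≠ 0 := by
    change (φ.mapMatrix (M.submatrix f g)).det ≠ 0 at hdetφ
    change (ψ.mapMatrix (M.submatrix f g)).det ≠ 0
    rw [← RingHom.map_det] at hdetφ ⊢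
    exact (map_ne_zero_iff ψ hψ).mpr (ne_of_apply_ne φ (by rwa [map_zero]))
  calc (M.map φ).rank = ((M.map ψ).submatrix f g).rank := by
        rw [rank_of_det_ne_zero hdetψ, Fintype.card_fin]
    _ ≤ (M.map ψ).rank := rank_submatrix_le _ _ _

end Matrix

theorem finrank_homologyOf_add_two_mul_finrank_range {F V : Type*} [Field F] [AddCommGroup V]
    [Module F V] [FiniteDimensional F V] {e : V →ₗ[F] V} (he : e ∘ₗ e = 0) :
    finrank F (homologyOf e) + 2 * finrank F (LinearMap.range e) = finrank F V := by
  have hle : LinearMap.range e ≤ LinearMap.ker e := LinearMap.range_le_ker_iff.mpr he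
  have hquot := Submodule.finrank_quotient_add_finrank
    ((LinearMap.range e).comap (LinearMap.ker e).subtype)
  rw [(Submodule.comapSubtypeEquivOfLe hle).finrank_eq] at hquot
  have := LinearMap.finrank_range_add_finrank_ker e
  change finrank F (homologyOf e) + _ = _ at hquot
  omega

section BaseChange

variable {R C : Type*} [CommRing R] [AddCommGroup C] [Module R C]

theorem finrank_homologyOf_baseChange {ι : Type*} [Fintype ι] [DecidableEq ι] (F : Type*) [Field F] [Algebra R F] (b : Basis ι R C)
    {d : C →ₗ[R] C} (hd : d ∘ₗ d = 0) :
    finrank F (homologyOf (d.baseChange F))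
      + 2 * ((LinearMap.toMatrix b b d).map (algebraMap R F)).rank = Fintype.card ι := by
  let bF := Algebra.TensorProduct.basis F b
  have : FiniteDimensional F (TensorProduct R F C) := .of_basis bF
  have hdF : d.baseChange F ∘ₗ d.baseChange F = 0 := by
    rw [← LinearMap.baseChange_comp, hd, LinearMap.baseChange_zero]
  rw [← LinearMap.toMatrix_baseChange, Matrix.rank_eq_finrank_range_toLin _ bF bF,
    Matrix.toLin_toMatrix, ← finrank_eq_card_basis bF]
  exact finrank_homologyOf_add_two_mul_finrank_range hdF

theorem finrank_homologyOf_baseChange_le (K F : Type*) [Field K] [Field F] [Algebra R K]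
    [Algebra R F] [Free R C] [Module.Finite R C] (hK : Function.Injective (algebraMap R K))
    {d : C →ₗ[R] C} (hd : d ∘ₗ d = 0) :
    finrank K (homologyOf (d.baseChange K)) ≤ finrank F (homologyOf (d.baseChange F)) := by
  classical
  let b := Free.chooseBasis R C
  have := finrank_homologyOf_baseChange K b hd
  have := finrank_homologyOf_baseChange F b hd
  have := (LinearMap.toMatrix b b d).rank_map_le_rank_map_of_injective hK (algebraMap R F)
  omega

end BaseChange

/-- Let `C` be a finite free module over `R = 𝔽₂[ℤ³]`, with
fraction field `K`, and `∂ : C → C` an `R`-linear differential with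
`∂ ∘ ∂ = 0`.  Then the `𝔽₂`-dimension of the homology of the base change of
`∂` along the augmentation `ε : R → 𝔽₂` is at least the `K`-dimension of the
homology of the base change of `∂` to `K`. -/
theorem stmt14 {C : Type*} [AddCommGroup C] [Module GroupAlgZ3 C]
    [Module.Free GroupAlgZ3 C] [Module.Finite GroupAlgZ3 C]
    (d : C →ₗ[GroupAlgZ3] C) (hd : d ∘ₗ d = 0) :
    Module.finrank (FractionRing GroupAlgZ3)
        (homologyOf (LinearMap.baseChange (FractionRing GroupAlgZ3) d)) ≤
      Module.finrank (ZMod 2)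
        (homologyOf (LinearMap.baseChange (ZMod 2) d)) := by
  exact finrank_homologyOf_baseChange_le _ _ (IsFractionRing.injective _ _) hd
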